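/- Let G be a countable group with a distinguished element g₀ ≠ 1 and positive integer n₀ such that, in G, for every x ∈ G the element [(g₀g₀^x)^{n₀}, (g₀^v g₀^{vx})^{n₀}] = 1 if x ≠ 1, while this equation fails for x = 1 (for some fixed v ∈ G). Then G does not admit a non-discrete Hausdorff group topology. -/

import Mathlib

/-! The equation defines a continuous map `G → G` in every group topology, so its solution set
`G \ {1}` is closed as soon as points are; hence `{1}` is open and the topology is discrete
(Markov's criterion). -/

theorem discreteTopology_of_eq_one_iff_ne_one {G H : Type*} [TopologicalSpace G] [Group G]
    [SeparatelyContinuousMul G] [TopologicalSpace H] [One H] [T1Space H] {f : G → H}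
    (hf : Continuous f) (hsol : ∀ x, f x = 1 ↔ x ≠ 1) : DiscreteTopology G := by
  have hsolSet : f ⁻¹' {1} = {1}ᶜ := Set.ext hsol
  rw [discreteTopology_iff_isOpen_singleton_one, ← isClosed_compl_iff, ← hsolSet]
  exact isClosed_singleton.preimage hf

theorem non_topologizable_of_equation_general {G : Type*} [Group G]
    (g₀ : G) (n₀ : ℕ) (v : G)
    (hsol : ∀ x : G, x ≠ 1 →
      ((g₀ * (x⁻¹ * g₀ * x)) ^ n₀)⁻¹ * (((v⁻¹ * g₀ * v) * ((v * x)⁻¹ * g₀ * (v * x))) ^ n₀)⁻¹ *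
        ((g₀ * (x⁻¹ * g₀ * x)) ^ n₀) * (((v⁻¹ * g₀ * v) * ((v * x)⁻¹ * g₀ * (v * x))) ^ n₀) = 1)
    (hone : ¬ (((g₀ * (1⁻¹ * g₀ * 1)) ^ n₀)⁻¹ *
        (((v⁻¹ * g₀ * v) * ((v * 1)⁻¹ * g₀ * (v * 1))) ^ n₀)⁻¹ *
        ((g₀ * (1⁻¹ * g₀ * 1)) ^ n₀) *
        (((v⁻¹ * g₀ * v) * ((v * 1)⁻¹ * g₀ * (v * 1))) ^ n₀) = 1)) :
    ∀ τ : TopologicalSpace G, @IsTopologicalGroup G τ _ → @T2Space G τ →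
      @DiscreteTopology G τ := by
  intro τ _ _
  refine discreteTopology_of_eq_one_iff_ne_one (f := fun x =>
    ((g₀ * (x⁻¹ * g₀ * x)) ^ n₀)⁻¹ * (((v⁻¹ * g₀ * v) * ((v * x)⁻¹ * g₀ * (v * x))) ^ n₀)⁻¹ *
      ((g₀ * (x⁻¹ * g₀ * x)) ^ n₀) * (((v⁻¹ * g₀ * v) * ((v * x)⁻¹ * g₀ * (v * x))) ^ n₀))
    (by fun_prop) fun x => ⟨fun hx hx1 => hone (hx1 ▸ hx), hsol x⟩

/-- If in a countable group `G` the equation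
`[(g₀ g₀ˣ)^{n₀}, (g₀ᵛ g₀^{vx})^{n₀}] = 1` (in one unknown `x`) holds for every `x ≠ 1`
but fails for `x = 1`, then `G` admits no non-discrete Hausdorff group topology. -/
theorem non_topologizable_of_equation {G : Type*} [Group G] [Countable G]
    (g₀ : G) (hg₀ : g₀ ≠ 1) (n₀ : ℕ) (hn₀ : 0 < n₀) (v : G)
    (hsol : ∀ x : G, x ≠ 1 →
      ((g₀ * (x⁻¹ * g₀ * x)) ^ n₀)⁻¹ * (((v⁻¹ * g₀ * v) * ((v * x)⁻¹ * g₀ * (v * x))) ^ n₀)⁻¹ *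
        ((g₀ * (x⁻¹ * g₀ * x)) ^ n₀) * (((v⁻¹ * g₀ * v) * ((v * x)⁻¹ * g₀ * (v * x))) ^ n₀) = 1)
    (hone : ¬ (((g₀ * (1⁻¹ * g₀ * 1)) ^ n₀)⁻¹ *
        (((v⁻¹ * g₀ * v) * ((v * 1)⁻¹ * g₀ * (v * 1))) ^ n₀)⁻¹ *
        ((g₀ * (1⁻¹ * g₀ * 1)) ^ n₀) *
        (((v⁻¹ * g₀ * v) * ((v * 1)⁻¹ * g₀ * (v * 1))) ^ n₀) = 1)) :
    ∀ τ : TopologicalSpace G, @IsTopologicalGroup G τ _ → @T2Space G τ →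
      @DiscreteTopology G τ :=
  non_topologizable_of_equation_general g₀ n₀ v hsol hone
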